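/- arXiv:2105.08642 — 4 statements merged into one kernel-verified Lean document; each statement's English description precedes it below -/
import Mathlib

section
/- If T is a bounded linear operator between complex Hilbert spaces with trivial kernel, then A := sqrt(T* T) has dense range in H, and T is topologically equivalent to A, i.e. T = V ∘ A ∘ U for some isomorphisms (invertible bounded linear maps) U of H and V from H onto the closure of the range of T. -/
/-! Since `A` is self-adjoint, `A* A = T* T` gives `‖A x‖ = ‖T x‖`. Hence `ker A = ker T = 0`, so
the range of `A`, whose closure is `(ker A)ᗮ`, is dense, and `A x ↦ T x` extends from this dense
range to an isometry of `H` onto the closure of the range of `T`; one can take `U = id`. -/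

open ContinuousLinearMap
open scoped InnerProduct

theorem ContinuousLinearMap.norm_apply_eq_of_adjoint_comp_self_eq
    {𝕜 E F G : Type*} [RCLike 𝕜]
    [NormedAddCommGroup E] [InnerProductSpace 𝕜 E] [CompleteSpace E]
    [NormedAddCommGroup F] [InnerProductSpace 𝕜 F] [CompleteSpace F]
    [NormedAddCommGroup G] [InnerProductSpace 𝕜 G] [CompleteSpace G]
    {S : E →L[𝕜] F} {T : E →L[𝕜] G} (h : S† ∘L S = T† ∘L T) (x : E) :
    ‖S x‖ = ‖T x‖ := by
  have hsq : ‖S x‖ ^ 2 = ‖T x‖ ^ 2 := by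
    rw [apply_norm_sq_eq_inner_adjoint_left, apply_norm_sq_eq_inner_adjoint_left, h]
  exact (sq_eq_sq₀ (norm_nonneg _) (norm_nonneg _)).mp hsq

theorem IsSelfAdjoint.denseRange_of_injective
    {𝕜 E : Type*} [RCLike 𝕜] [NormedAddCommGroup E] [InnerProductSpace 𝕜 E] [CompleteSpace E]
    {A : E →L[𝕜] E} (hA : IsSelfAdjoint A) (hinj : Function.Injective A) : DenseRange A := by
  have hclosure : A.range.topologicalClosure = ⊤ := by
    rw [← hA.adjoint_eq, ← orthogonal_ker, LinearMap.ker_eq_bot.mpr hinj,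
      Submodule.bot_orthogonal_eq_top]
  exact Submodule.dense_iff_topologicalClosure_eq_top.mpr hclosure

theorem LinearMap.denseRange_codRestrict_topologicalClosure_range
    {R E M : Type*} [Ring R] [AddCommGroup E] [Module R E]
    [AddCommGroup M] [Module R M] [TopologicalSpace M] [ContinuousAdd M] [ContinuousConstSMul R M]
    (f : E →ₗ[R] M) :
    DenseRange (f.codRestrict (LinearMap.range f).topologicalClosure
      fun x ↦ Submodule.le_topologicalClosure _ (LinearMap.mem_range_self f x)) := by
  rw [DenseRange, Subtype.dense_iff, ← Set.range_comp]
  exact (Submodule.topologicalClosure_coe _).subset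

theorem exists_linearIsometryEquiv_topologicalClosure_range_of_norm_eq
    {𝕜 E F G : Type*} [NormedField 𝕜] [AddCommGroup E] [Module 𝕜 E]
    [NormedAddCommGroup F] [NormedSpace 𝕜 F] [CompleteSpace F]
    [NormedAddCommGroup G] [NormedSpace 𝕜 G] [CompleteSpace G]
    {f : E →ₗ[𝕜] F} {g : E →ₗ[𝕜] G} (hf : DenseRange f) (hfg : ∀ x, ‖f x‖ = ‖g x‖) :
    ∃ V : F ≃ₗᵢ[𝕜] (LinearMap.range g).topologicalClosure, ∀ x, (V (f x) : G) = g x :=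
  ⟨(LinearEquiv.refl 𝕜 E).extendOfIsometry f _ hf
      g.denseRange_codRestrict_topologicalClosure_range fun x ↦ by simpa using (hfg x).symm,
    fun x ↦ by rw [LinearEquiv.extendOfIsometry_eq]; rfl⟩

/-- If `T` is bounded linear between complex Hilbert spaces with trivial kernel, then
`A = sqrt (T* T)` has dense range, and `T` is topologically equivalent to `A` viewed as an
operator into the closure of the range of `T`: `T = V ∘ A ∘ U` for isomorphisms `U` of `H`
and `V` from `H` onto the closure of the range of `T`. -/
theorem topologically_equivalent_of_injective
    {H H' : Type*} [NormedAddCommGroup H] [InnerProductSpace ℂ H] [CompleteSpace H]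
    [NormedAddCommGroup H'] [InnerProductSpace ℂ H'] [CompleteSpace H']
    (T : H →L[ℂ] H') (A : H →L[ℂ] H)
    (hA : A.IsPositive)
    (hAA : A ∘L A = ContinuousLinearMap.adjoint T ∘L T)
    (hker : LinearMap.ker (T : H →ₗ[ℂ] H') = ⊥) :
    DenseRange A ∧
    ∃ (U : H ≃L[ℂ] H) (V : H ≃L[ℂ] ↥((LinearMap.range (T : H →ₗ[ℂ] H')).topologicalClosure)),
      ∀ x : H, T x = (V (A (U x)) : H') := by
  have hnorm : ∀ x, ‖A x‖ = ‖T x‖ :=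
    norm_apply_eq_of_adjoint_comp_self_eq (by rw [hA.isSelfAdjoint.adjoint_eq, hAA])
  have hAinj : Function.Injective A := (injective_iff_map_eq_zero A).2 fun x hx ↦
    LinearMap.ker_eq_bot'.1 hker x (norm_eq_zero.1 ((hnorm x).symm.trans (by rw [hx, norm_zero])))
  have hdense : DenseRange A := hA.isSelfAdjoint.denseRange_of_injective hAinj
  obtain ⟨V, hV⟩ := exists_linearIsometryEquiv_topologicalClosure_range_of_norm_eq
    (f := (A : H →ₗ[ℂ] H)) (g := (T : H →ₗ[ℂ] H')) hdense hnorm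
  exact ⟨hdense, .refl ℂ H, V.toContinuousLinearEquiv, fun x ↦ (hV x).symm⟩
end

section
/- Let A be a bounded positive semi-definite operator on a complex Hilbert space H with spectral measure E, and let I be an interval of the form [0,μ], [0,μ), (μ,∞) or [μ,∞) with complement I^c = [0,∞) \ I. Then the spectral subspace E(I)H is a maximal I-subspace for A: it is an I-subspace, and any strictly larger linear subspace contains a nonzero vector x with ‖A x‖/‖x‖ ∉ I. -/
/-!
For `x` with `E S x = x` the scalar measure `μ x` lives on `S ∩ [0, ∞)`, has total mass
`‖x‖²`, and `‖A x‖² = ∫ t² dμ_x`. Hence `(‖A x‖ / ‖x‖)²` is a `μ x`-average of `t²`, and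
every bound `t ≤ c`, `t < c`, `c < t`, `c ≤ t` valid on `S ∩ [0, ∞)` passes to
`‖A x‖ / ‖x‖`. If `y ∈ Y` lies outside `E(I)H`, then `x = y - E(I) y ∈ Y` is nonzero with
`E(I) x = 0`, so `μ x` lives on `Iᶜ ∩ [0, ∞)`, again an interval of one of the four shapes.
-/

open MeasureTheory

/-- `E` is the projection-valued spectral measure of the bounded positive operator `A`
on a complex Hilbert space, with `μ x` the associated scalar Borel measures
`S ↦ ⟪x, E S x⟫`, so that `A = ∫ λ dE(λ)` (expressed through the quadratic forms
`⟪x, A x⟫ = ∫ λ dμ_x(λ)` and `‖A x‖² = ∫ λ² dμ_x(λ)`). -/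
structure IsSpectralMeasureOf {H : Type*} [NormedAddCommGroup H] [InnerProductSpace ℂ H]
    [CompleteSpace H] (A : H →L[ℂ] H) (E : Set ℝ → (H →L[ℂ] H))
    (μ : H → Measure ℝ) : Prop where
  selfAdjoint : ∀ S : Set ℝ, IsSelfAdjoint (E S)
  idem : ∀ S : Set ℝ, E S ∘L E S = E S
  inter : ∀ S S' : Set ℝ, MeasurableSet S → MeasurableSet S' →
    E S ∘L E S' = E (S ∩ S')
  empty : E ∅ = 0
  univ : E Set.univ = 1
  countablyAdditive : ∀ f : ℕ → Set ℝ, Pairwise (Function.onFun Disjoint f) →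
    (∀ n, MeasurableSet (f n)) →
    ∀ x : H, HasSum (fun n => E (f n) x) (E (⋃ n, f n) x)
  suppNonneg : E (Set.Iio 0) = 0
  mu_eq : ∀ (x : H) (S : Set ℝ), MeasurableSet S →
    μ x S = ENNReal.ofReal (Complex.re (inner ℂ x (E S x)))
  integral_id : ∀ x : H, Complex.re (inner ℂ x (A x)) = ∫ t, t ∂(μ x)
  integral_sq : ∀ x : H, ‖A x‖ ^ 2 = ∫ t, t ^ 2 ∂(μ x)

open Filter Set

theorem integral_lt_integral_of_ae_lt {α : Type*} [MeasurableSpace α] {ν : Measure α}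
    (hν : ν ≠ 0) {f g : α → ℝ} (hf : Integrable f ν) (hg : Integrable g ν)
    (hfg : ∀ᵐ t ∂ν, f t < g t) : ∫ t, f t ∂ν < ∫ t, g t ∂ν := by
  rw [← sub_pos, ← integral_sub hg hf, integral_pos_iff_support_of_nonneg_ae
    (hfg.mono fun t ht => (sub_pos.mpr ht).le) (hg.sub hf), pos_iff_ne_zero]
  intro hnull
  have hfalse : ∀ᵐ t ∂ν, False := by
    filter_upwards [hfg, measure_eq_zero_iff_ae_notMem.mp hnull] with t ht hsupp
    exact hsupp (sub_pos.mpr ht).ne'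
  exact hν (ae_eq_bot.mp (eventually_false_iff_eq_bot.mp hfalse))

def IsInitialOrFinalSegment (I : Set ℝ) : Prop :=
  ∃ μ : ℝ, 0 ≤ μ ∧ (I = Icc 0 μ ∨ I = Ico 0 μ ∨ I = Ioi μ ∨ I = Ici μ)

namespace IsInitialOrFinalSegment

theorem measurableSet {I : Set ℝ} (hI : IsInitialOrFinalSegment I) : MeasurableSet I := by
  obtain ⟨μ, -, rfl | rfl | rfl | rfl⟩ := hI
  exacts [measurableSet_Icc, measurableSet_Ico, measurableSet_Ioi, measurableSet_Ici]

theorem compl_inter_Ici {I : Set ℝ} (hI : IsInitialOrFinalSegment I) :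
    IsInitialOrFinalSegment (Iᶜ ∩ Ici 0) := by
  obtain ⟨μ, hμ, rfl | rfl | rfl | rfl⟩ := hI <;>
    [refine ⟨μ, hμ, .inr (.inr (.inl ?_))⟩; refine ⟨μ, hμ, .inr (.inr (.inr ?_))⟩;
      refine ⟨μ, hμ, .inl ?_⟩; refine ⟨μ, hμ, .inr (.inl ?_)⟩]
  all_goals
    ext t
    simp only [mem_inter_iff, mem_compl_iff, mem_Icc, mem_Ico, mem_Ioi, mem_Ici]
    grind

end IsInitialOrFinalSegment

namespace IsSpectralMeasureOf

variable {H : Type*} [NormedAddCommGroup H] [InnerProductSpace ℂ H] [CompleteSpace H]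
  {A : H →L[ℂ] H} {E : Set ℝ → (H →L[ℂ] H)} {μ : H → Measure ℝ}

theorem isStarProjection (hE : IsSpectralMeasureOf A E μ) (S : Set ℝ) :
    IsStarProjection (E S) :=
  ⟨hE.idem S, hE.selfAdjoint S⟩

theorem apply_apply (hE : IsSpectralMeasureOf A E μ) (S : Set ℝ) (x : H) :
    E S (E S x) = E S x :=
  DFunLike.congr_fun (hE.idem S) x

theorem apply_apply_of_measurableSet (hE : IsSpectralMeasureOf A E μ) {S S' : Set ℝ}
    (hS : MeasurableSet S) (hS' : MeasurableSet S') (x : H) : E S (E S' x) = E (S ∩ S') x :=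
  DFunLike.congr_fun (hE.inter S S' hS hS') x

theorem inner_apply_left (hE : IsSpectralMeasureOf A E μ) (S : Set ℝ) (x y : H) :
    inner ℂ (E S x) y = inner ℂ x (E S y) :=
  (hE.selfAdjoint S).isSymmetric x y

theorem norm_apply_le (hE : IsSpectralMeasureOf A E μ) (S : Set ℝ) (x : H) :
    ‖E S x‖ ≤ ‖x‖ :=
  ((E S).le_opNorm x).trans
    (mul_le_of_le_one_left (norm_nonneg x) (hE.isStarProjection S).norm_le)

theorem measure_univ (hE : IsSpectralMeasureOf A E μ) (x : H) :
    μ x Set.univ = ENNReal.ofReal (‖x‖ ^ 2) := by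
  rw [hE.mu_eq x Set.univ MeasurableSet.univ, hE.univ, one_apply_eq_self,
    ← RCLike.re_to_complex, inner_self_eq_norm_sq]

theorem isFiniteMeasure (hE : IsSpectralMeasureOf A E μ) (x : H) : IsFiniteMeasure (μ x) :=
  ⟨by rw [hE.measure_univ x]; exact ENNReal.ofReal_lt_top⟩

theorem measure_ne_zero (hE : IsSpectralMeasureOf A E μ) {x : H} (hx : x ≠ 0) : μ x ≠ 0 := by
  rw [← Measure.measure_univ_ne_zero, hE.measure_univ x]
  simpa [ENNReal.ofReal_eq_zero, not_le] using hx

theorem integral_const (hE : IsSpectralMeasureOf A E μ) (x : H) (c : ℝ) :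
    ∫ _, c ∂μ x = c * ‖x‖ ^ 2 := by
  rw [MeasureTheory.integral_const, smul_eq_mul, measureReal_def, hE.measure_univ,
    ENNReal.toReal_ofReal (sq_nonneg _), mul_comm]

theorem ae_notMem_of_apply_eq_zero (hE : IsSpectralMeasureOf A E μ) {S : Set ℝ}
    (hS : MeasurableSet S) {x : H} (hx : E S x = 0) : ∀ᵐ t ∂μ x, t ∉ S := by
  refine measure_eq_zero_iff_ae_notMem.mp ?_
  rw [hE.mu_eq x S hS, hx, inner_zero_right, Complex.zero_re, ENNReal.ofReal_zero]

theorem ae_mem_of_apply_eq_self (hE : IsSpectralMeasureOf A E μ) {S : Set ℝ}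
    (hS : MeasurableSet S) {x : H} (hx : E S x = x) : ∀ᵐ t ∂μ x, t ∈ S := by
  have hcompl : E Sᶜ x = 0 := by
    rw [← hx, hE.apply_apply_of_measurableSet hS.compl hS, compl_inter_self, hE.empty,
      zero_apply]
  simpa using hE.ae_notMem_of_apply_eq_zero hS.compl hcompl

theorem ae_nonneg (hE : IsSpectralMeasureOf A E μ) (x : H) : ∀ᵐ t ∂μ x, 0 ≤ t := by
  have hneg : E (Iio 0) x = 0 := by rw [hE.suppNonneg, zero_apply]
  simpa using hE.ae_notMem_of_apply_eq_zero measurableSet_Iio hneg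

theorem measure_apply_eq_restrict (hE : IsSpectralMeasureOf A E μ) {S : Set ℝ}
    (hS : MeasurableSet S) (x : H) : μ (E S x) = (μ x).restrict S := by
  refine Measure.ext fun S' hS' => ?_
  rw [Measure.restrict_apply hS', hE.mu_eq _ S' hS', hE.mu_eq x _ (hS'.inter hS),
    hE.apply_apply_of_measurableSet hS' hS, hE.inner_apply_left,
    hE.apply_apply_of_measurableSet hS (hS'.inter hS), inter_eq_right.mpr inter_subset_right]

/- Without this, `∫ t² dμ_x` could be the junk value `0`. The truncations `E [-n, n] x` have
`∫_{[-n, n]} t² dμ_x = ‖A (E [-n, n] x)‖² ≤ (‖A‖ ‖x‖)²`, uniformly in `n`. -/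
theorem integrable_sq (hE : IsSpectralMeasureOf A E μ) (x : H) :
    Integrable (fun t : ℝ => t ^ 2) (μ x) := by
  have := hE.isFiniteMeasure x
  have hcover : AECover (μ x) atTop fun n : ℕ => Icc (-(n : ℝ)) n :=
    aecover_Icc (tendsto_neg_atTop_atBot.comp tendsto_natCast_atTop_atTop)
      tendsto_natCast_atTop_atTop
  refine hcover.integrable_of_integral_bounded_of_nonneg_ae ((‖A‖ * ‖x‖) ^ 2)
    (fun n => (continuous_pow 2).integrableOn_Icc) (ae_of_all _ fun t => sq_nonneg t)
    (Eventually.of_forall fun n => ?_)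
  calc ∫ t in Icc (-(n : ℝ)) n, t ^ 2 ∂μ x = ‖A (E (Icc (-(n : ℝ)) n) x)‖ ^ 2 := by
        rw [hE.integral_sq, hE.measure_apply_eq_restrict measurableSet_Icc]
    _ ≤ (‖A‖ * ‖x‖) ^ 2 := by
        gcongr
        exact (A.le_opNorm _).trans (by gcongr; exact hE.norm_apply_le _ x)

theorem div_norm_le (hE : IsSpectralMeasureOf A E μ) {x : H} {c : ℝ} (hc : 0 ≤ c)
    (h : ∀ᵐ t ∂μ x, t ≤ c) : ‖A x‖ / ‖x‖ ≤ c := by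
  have := hE.isFiniteMeasure x
  have hsq : ‖A x‖ ^ 2 ≤ (c * ‖x‖) ^ 2 := by
    rw [hE.integral_sq, mul_pow, ← hE.integral_const]
    refine integral_mono_ae (hE.integrable_sq x) (integrable_const _) ?_
    filter_upwards [h, hE.ae_nonneg x] with t ht ht₀
    exact pow_le_pow_left₀ ht₀ ht 2
  exact div_le_of_le_mul₀ (norm_nonneg x) hc
    (le_of_pow_le_pow_left₀ two_ne_zero (by positivity) hsq)

theorem div_norm_lt (hE : IsSpectralMeasureOf A E μ) {x : H} (hx : x ≠ 0) {c : ℝ}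
    (hc : 0 ≤ c) (h : ∀ᵐ t ∂μ x, t < c) : ‖A x‖ / ‖x‖ < c := by
  have := hE.isFiniteMeasure x
  have hsq : ‖A x‖ ^ 2 < (c * ‖x‖) ^ 2 := by
    rw [hE.integral_sq, mul_pow, ← hE.integral_const]
    refine integral_lt_integral_of_ae_lt (hE.measure_ne_zero hx) (hE.integrable_sq x)
      (integrable_const _) ?_
    filter_upwards [h, hE.ae_nonneg x] with t ht ht₀
    exact pow_lt_pow_left₀ ht ht₀ two_ne_zero
  rw [div_lt_iff₀ (norm_pos_iff.mpr hx)]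
  exact lt_of_pow_lt_pow_left₀ 2 (by positivity) hsq

theorem le_div_norm (hE : IsSpectralMeasureOf A E μ) {x : H} (hx : x ≠ 0) {c : ℝ}
    (hc : 0 ≤ c) (h : ∀ᵐ t ∂μ x, c ≤ t) : c ≤ ‖A x‖ / ‖x‖ := by
  have := hE.isFiniteMeasure x
  have hsq : (c * ‖x‖) ^ 2 ≤ ‖A x‖ ^ 2 := by
    rw [hE.integral_sq, mul_pow, ← hE.integral_const]
    refine integral_mono_ae (integrable_const _) (hE.integrable_sq x) ?_
    filter_upwards [h] with t ht
    exact pow_le_pow_left₀ hc ht 2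
  rw [le_div_iff₀ (norm_pos_iff.mpr hx)]
  exact le_of_pow_le_pow_left₀ two_ne_zero (norm_nonneg _) hsq

theorem lt_div_norm (hE : IsSpectralMeasureOf A E μ) {x : H} (hx : x ≠ 0) {c : ℝ}
    (hc : 0 ≤ c) (h : ∀ᵐ t ∂μ x, c < t) : c < ‖A x‖ / ‖x‖ := by
  have := hE.isFiniteMeasure x
  have hsq : (c * ‖x‖) ^ 2 < ‖A x‖ ^ 2 := by
    rw [hE.integral_sq, mul_pow, ← hE.integral_const]
    refine integral_lt_integral_of_ae_lt (hE.measure_ne_zero hx) (integrable_const _)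
      (hE.integrable_sq x) ?_
    filter_upwards [h] with t ht
    exact pow_lt_pow_left₀ ht hc two_ne_zero
  rw [lt_div_iff₀ (norm_pos_iff.mpr hx)]
  exact lt_of_pow_lt_pow_left₀ 2 (norm_nonneg _) hsq

theorem div_norm_mem (hE : IsSpectralMeasureOf A E μ) {I : Set ℝ}
    (hI : IsInitialOrFinalSegment I) {x : H} (hx : x ≠ 0) (h : ∀ᵐ t ∂μ x, t ∈ I) :
    ‖A x‖ / ‖x‖ ∈ I := by
  have hnonneg : 0 ≤ ‖A x‖ / ‖x‖ := by positivity
  obtain ⟨c, hc, rfl | rfl | rfl | rfl⟩ := hI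
  · exact ⟨hnonneg, hE.div_norm_le hc (h.mono fun t ht => ht.2)⟩
  · exact ⟨hnonneg, hE.div_norm_lt hx hc (h.mono fun t ht => ht.2)⟩
  · exact hE.lt_div_norm hx hc h
  · exact hE.le_div_norm hx hc h

end IsSpectralMeasureOf

theorem spectral_subspace_maximal_isISubspace_general
    {H : Type*} [NormedAddCommGroup H] [InnerProductSpace ℂ H] [CompleteSpace H]
    (A : H →L[ℂ] H)
    (E : Set ℝ → (H →L[ℂ] H)) (μmeas : H → Measure ℝ)
    (hE : IsSpectralMeasureOf A E μmeas)
    (I : Set ℝ)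
    (hI : ∃ μ : ℝ, 0 ≤ μ ∧
      (I = Set.Icc 0 μ ∨ I = Set.Ico 0 μ ∨ I = Set.Ioi μ ∨ I = Set.Ici μ)) :
    (∀ x ∈ LinearMap.range (E I : H →ₗ[ℂ] H), x ≠ 0 → ‖A x‖ / ‖x‖ ∈ I) ∧
    (∀ Y : Submodule ℂ H, LinearMap.range (E I : H →ₗ[ℂ] H) < Y →
      ∃ x ∈ Y, x ≠ 0 ∧ ‖A x‖ / ‖x‖ ∉ I) := by
  have hI : IsInitialOrFinalSegment I := hI
  refine ⟨?_, fun Y hY => ?_⟩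
  · rintro _ ⟨y, rfl⟩ hx
    exact hE.div_norm_mem hI hx
      (hE.ae_mem_of_apply_eq_self hI.measurableSet (hE.apply_apply I y))
  · obtain ⟨y, hyY, hy⟩ := SetLike.exists_of_lt hY
    have hx : y - E I y ≠ 0 := sub_ne_zero.mpr fun h => hy ⟨y, h.symm⟩
    have hker : E I (y - E I y) = 0 := by rw [map_sub, hE.apply_apply, sub_self]
    have hcompl : ∀ᵐ t ∂μmeas (y - E I y), t ∈ Iᶜ ∩ Ici 0 :=
      (hE.ae_notMem_of_apply_eq_zero hI.measurableSet hker).and (hE.ae_nonneg _)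
    exact ⟨y - E I y, Y.sub_mem hyY (hY.le ⟨y, rfl⟩), hx,
      fun hmem => (hE.div_norm_mem hI.compl_inter_Ici hx hcompl).1 hmem⟩

/-- For a bounded positive operator `A` with spectral measure `E` and an interval `I` of
the form `[0,μ]`, `[0,μ)`, `(μ,∞)` or `[μ,∞)`, the spectral subspace `E(I)H` is a maximal
`I`-subspace for `A`: it is an `I`-subspace, and any strictly larger linear subspace
contains a nonzero vector `x` with `‖A x‖ / ‖x‖ ∉ I`. -/
theorem spectral_subspace_maximal_isISubspace
    {H : Type*} [NormedAddCommGroup H] [InnerProductSpace ℂ H] [CompleteSpace H]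
    (A : H →L[ℂ] H) (hA : A.IsPositive)
    (E : Set ℝ → (H →L[ℂ] H)) (μmeas : H → Measure ℝ)
    (hE : IsSpectralMeasureOf A E μmeas)
    (I : Set ℝ)
    (hI : ∃ μ : ℝ, 0 ≤ μ ∧
      (I = Set.Icc 0 μ ∨ I = Set.Ico 0 μ ∨ I = Set.Ioi μ ∨ I = Set.Ici μ)) :
    (∀ x ∈ LinearMap.range (E I : H →ₗ[ℂ] H), x ≠ 0 → ‖A x‖ / ‖x‖ ∈ I) ∧
    (∀ Y : Submodule ℂ H, LinearMap.range (E I : H →ₗ[ℂ] H) < Y →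
      ∃ x ∈ Y, x ≠ 0 ∧ ‖A x‖ / ‖x‖ ∉ I) :=
  spectral_subspace_maximal_isISubspace_general A E μmeas hE I hI
end

section
/- If L : H → H' is an injective bounded linear operator between Hilbert spaces, then the Hilbert dimension of H is at most the Hilbert dimension of H' (as cardinals). -/
open Cardinal

theorem Cardinal.lift_mk_le_lift_mk_of_forall_exists_countable {α : Type u} {β : Type v}
    [Infinite β] (s : β → Set α) (hs : ∀ j, (s j).Countable) (hcover : ∀ a, ∃ j, a ∈ s j) :
    lift.{v} #α ≤ lift.{u} #β := by
  have hunion : ⋃ j, s j = Set.univ := Set.eq_univ_of_forall fun a => Set.mem_iUnion.2 (hcover a)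
  calc lift.{v} #α = lift.{v} #(⋃ j, s j) := by rw [hunion, mk_univ]
    _ ≤ lift.{u} #β * ⨆ j, lift.{v} #(s j) := mk_iUnion_le_lift s
    _ ≤ lift.{u} #β * ℵ₀ := by
      gcongr
      exact ciSup_le' fun j => lift_le_aleph0.2 (le_aleph0_iff_set_countable.2 (hs j))
    _ = lift.{u} #β := mul_aleph0_eq (aleph0_le_lift.2 (aleph0_le_mk β))

section InnerProductSpace

variable {𝕜 : Type*} [RCLike 𝕜] {E F : Type*} {ι : Type*}
  [NormedAddCommGroup E] [InnerProductSpace 𝕜 E] [NormedAddCommGroup F] [InnerProductSpace 𝕜 F]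

local notation "⟪" x ", " y "⟫" => inner 𝕜 x y

theorem Orthonormal.countable_inner_ne_zero {v : ι → E} (hv : Orthonormal 𝕜 v) (x : E) :
    {i | ⟪v i, x⟫ ≠ 0}.Countable :=
  (hv.inner_products_summable x).countable_support.mono fun i hi => by simpa using hi

theorem Orthonormal.countable_inner_apply_ne_zero [CompleteSpace E] [CompleteSpace F]
    {v : ι → E} (hv : Orthonormal 𝕜 v) (L : E →L[𝕜] F) (y : F) :
    {i | ⟪y, L (v i)⟫ ≠ 0}.Countable := by
  refine (hv.countable_inner_ne_zero (L.adjoint y)).mono fun i hi => ?_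
  rwa [Set.mem_ofPred_eq, ← inner_conj_symm, L.adjoint_inner_left, map_ne_zero]

theorem HilbertBasis.exists_inner_ne_zero (b : HilbertBasis ι 𝕜 E) {x : E} (hx : x ≠ 0) :
    ∃ i, ⟪b i, x⟫ ≠ 0 := by
  by_contra! h
  refine hx (b.repr.injective ?_)
  ext i
  simp [b.repr_apply_apply, h]

end InnerProductSpace

theorem HilbertBasis.rank_eq_mk {𝕜 : Type*} [RCLike 𝕜] {E ι : Type w} [NormedAddCommGroup E]
    [InnerProductSpace 𝕜 E] [Finite ι] (b : HilbertBasis ι 𝕜 E) : Module.rank 𝕜 E = #ι := by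
  have := Fintype.ofFinite ι
  exact b.toOrthonormalBasis.toBasis.mk_eq_rank''.symm

/-- If `L : H → H'` is an injective bounded linear operator between Hilbert spaces, then
the Hilbert dimension of `H` (the cardinality of any Hilbert/orthonormal basis) is at most
the Hilbert dimension of `H'`. -/
theorem hilbert_dim_le_of_injective
    {H : Type u} {H' : Type v}
    [NormedAddCommGroup H] [InnerProductSpace ℂ H] [CompleteSpace H]
    [NormedAddCommGroup H'] [InnerProductSpace ℂ H'] [CompleteSpace H']
    (L : H →L[ℂ] H') (hL : Function.Injective L)
    {ι : Type u} {ι' : Type v}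
    (b : HilbertBasis ι ℂ H) (b' : HilbertBasis ι' ℂ H') :
    Cardinal.lift.{v} (Cardinal.mk ι) ≤ Cardinal.lift.{u} (Cardinal.mk ι') := by
  rcases finite_or_infinite ι' with hfin | hinf
  · calc lift.{v} #ι ≤ lift.{v} (Module.rank ℂ H) :=
          lift_le.2 b.orthonormal.linearIndependent.cardinal_le_rank
      _ ≤ lift.{u} (Module.rank ℂ H') := LinearMap.lift_rank_le_of_injective (L : H →ₗ[ℂ] H') hL
      _ = lift.{u} #ι' := by rw [b'.rank_eq_mk]
  · -- Each `b i` is seen by some `b' j` since `L (b i) ≠ 0`, and by Bessel's inequality for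
    -- `L† (b' j)` each `b' j` sees only countably many `b i`.
    refine lift_mk_le_lift_mk_of_forall_exists_countable
      (fun j => {i | inner ℂ (b' j) (L (b i)) ≠ 0})
      (fun j => b.orthonormal.countable_inner_apply_ne_zero L (b' j)) fun i => ?_
    exact b'.exists_inner_ne_zero ((map_ne_zero_iff L hL).2 (b.orthonormal.ne_zero i))
end

section
/- Let M be a cardinal-number-valued σ-additive Borel measure on [0,∞) and K a σ-compact subset with M(K) finite. Then there is a finite set F ⊆ K, consisting exactly of the points x with M({x}) > 0, such that M(K \ F) = 0; in particular M(K) = Σ_{x∈F} M({x}). -/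
/-!
Read in `ℕ∞ ⊆ ℝ≥0∞`, `M` is a measure on the Borel sets, and restricted to `K` it is a finite
measure taking no values in `(0, 1)`. Such a measure has finitely many atoms, each of mass at
least `1`. Any other point `x` has mass `0`, so by continuity from above some ball around `x` has
mass `< 1`, hence `0`; by second countability the complement of the atoms is then null.
-/

/-- A σ-additive, monotone, cardinal-number-valued measure on the Borel subsets of `ℝ`. -/
structure CardinalBorelMeasure where
  m : Set ℝ → Cardinal.{0}
  empty : m ∅ = 0
  mono : ∀ ⦃S S' : Set ℝ⦄, MeasurableSet S → MeasurableSet S' → S ⊆ S' → m S ≤ m S'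
  sigma_additive : ∀ f : ℕ → Set ℝ, Pairwise (Function.onFun Disjoint f) →
    (∀ n, MeasurableSet (f n)) → m (⋃ n, f n) = Cardinal.sum fun n => m (f n)

open Set MeasureTheory Metric
open scoped ENNReal

namespace Cardinal

theorem toENNReal_toENat_sum {ι : Type*} (f : ι → Cardinal) :
    ((sum f).toENat : ℝ≥0∞) = ∑' i, ((f i).toENat : ℝ≥0∞) :=
  calc ((sum f).toENat : ℝ≥0∞) = ENat.card (Σ i, (f i).out) := by
        rw [ENat.card, mk_sigma]; simp only [mk_out]
    _ = ∑' _ : Σ i, (f i).out, 1 := ENNReal.tsum_one.symm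
    _ = ∑' i, ∑' _ : (f i).out, 1 := ENNReal.tsum_sigma' _
    _ = ∑' i, ((f i).toENat : ℝ≥0∞) := by simp only [ENNReal.tsum_one, ENat.card, mk_out]

theorem eq_of_lt_aleph0_of_toENat_eq {a b : Cardinal} (ha : a < ℵ₀)
    (h : a.toENat = b.toENat) : a = b :=
  toENat_injOn ha.le (toENat_ne_top.1 (h ▸ toENat_ne_top.2 ha)).le h

end Cardinal

section NoValuesInUnitInterval

variable {X : Type*} [MeasurableSpace X] {μ : Measure X} [IsFiniteMeasure μ]

theorem finite_setOf_measure_singleton_ne_zero [MeasurableSingletonClass X]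
    (hμ : ∀ s, MeasurableSet s → μ s < 1 → μ s = 0) : {x | μ {x} ≠ 0}.Finite := by
  by_contra h
  refine measure_ne_top μ _ (Set.Infinite.meas_eq_top h ⟨1, one_ne_zero, fun x hx => ?_⟩)
  exact not_lt.1 fun h1 => hx (hμ _ (measurableSet_singleton x) h1)

theorem measure_compl_setOf_measure_singleton_ne_zero [MetricSpace X]
    [SecondCountableTopology X] [OpensMeasurableSpace X]
    (hμ : ∀ s, MeasurableSet s → μ s < 1 → μ s = 0) : μ {x | μ {x} ≠ 0}ᶜ = 0 := by
  refine measure_null_of_locally_null _ fun x hx => ?_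
  have h := tendsto_measure_thickening (μ := μ) (s := {x}) ⟨1, one_pos, measure_ne_top _ _⟩
  rw [closure_singleton, not_not.1 hx] at h
  obtain ⟨r, hr1, hr⟩ := ((h.eventually (gt_mem_nhds one_pos)).and self_mem_nhdsWithin).exists
  refine ⟨ball x r, mem_nhdsWithin_of_mem_nhds (ball_mem_nhds x hr), ?_⟩
  rw [← thickening_singleton]
  exact hμ _ isOpen_thickening.measurableSet hr1

end NoValuesInUnitInterval

namespace CardinalBorelMeasure

variable (M : CardinalBorelMeasure)

noncomputable def toMeasure : Measure ℝ :=
  Measure.ofMeasurable (fun s _ => ((M.m s).toENat : ℝ≥0∞)) (by simp [M.empty])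
    fun f hf hd => by rw [M.sigma_additive f hd hf, Cardinal.toENNReal_toENat_sum]

theorem toMeasure_apply {s : Set ℝ} (hs : MeasurableSet s) :
    M.toMeasure s = (M.m s).toENat :=
  Measure.ofMeasurable_apply s hs

variable {K : Set ℝ} (hK : MeasurableSet K)
include hK

theorem restrict_toMeasure_apply {s : Set ℝ} (hs : MeasurableSet s) :
    M.toMeasure.restrict K s = (M.m (K ∩ s)).toENat := by
  rw [Measure.restrict_apply hs, inter_comm, M.toMeasure_apply (hK.inter hs)]

theorem restrict_toMeasure_eq_zero_of_lt_one {s : Set ℝ} (hs : MeasurableSet s)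
    (h : M.toMeasure.restrict K s < 1) : M.toMeasure.restrict K s = 0 := by
  rw [M.restrict_toMeasure_apply hK hs, ← ENat.toENNReal_one, ENat.toENNReal_lt,
    Order.lt_one_iff] at h
  rw [M.restrict_toMeasure_apply hK hs, h, ENat.toENNReal_zero]

theorem isFiniteMeasure_restrict_toMeasure (hfin : M.m K < Cardinal.aleph0) :
    IsFiniteMeasure (M.toMeasure.restrict K) :=
  isFiniteMeasure_restrict.2 <| by
    rw [M.toMeasure_apply hK, ENat.toENNReal_ne_top, Cardinal.toENat_ne_top]; exact hfin

theorem m_eq_sum_singleton_of_m_diff_eq_zero (hfin : M.m K < Cardinal.aleph0) {F : Finset ℝ}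
    (hFK : ↑F ⊆ K) (hnull : M.m (K \ ↑F) = 0) : M.m K = ∑ x ∈ F, M.m {x} := by
  have hF : MeasurableSet (↑F : Set ℝ) := F.finite_toSet.measurableSet
  have h : M.toMeasure K = ∑ x ∈ F, M.toMeasure {x} := by
    rw [sum_measure_singleton, ← measure_inter_add_sdiff K hF, inter_eq_right.2 hFK,
      M.toMeasure_apply (hK.diff hF), hnull, map_zero, ENat.toENNReal_zero, add_zero]
  simp only [M.toMeasure_apply, hK, measurableSet_singleton, ← ENat.toENNRealRingHom_apply,
    ← map_sum] at h
  exact Cardinal.eq_of_lt_aleph0_of_toENat_eq hfin (ENat.toENNReal_inj.1 h)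

end CardinalBorelMeasure

theorem cardinalMeasure_sigmaCompact_concentrated_general (M : CardinalBorelMeasure)
    (K : Set ℝ)
    (hK : ∃ C : ℕ → Set ℝ, (∀ n, IsCompact (C n)) ∧ K = ⋃ n, C n)
    (hfin : M.m K < Cardinal.aleph0) :
    ∃ F : Finset ℝ, ↑F ⊆ K ∧ (∀ x ∈ K, (x ∈ F ↔ 0 < M.m {x})) ∧
      M.m (K \ ↑F) = 0 ∧ M.m K = ∑ x ∈ F, M.m {x} := by
  have hKm : MeasurableSet K := by
    obtain ⟨C, hC, rfl⟩ := hK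
    exact .iUnion fun n => (hC n).isClosed.measurableSet
  have := M.isFiniteMeasure_restrict_toMeasure hKm hfin
  have hμ : ∀ s, MeasurableSet s → M.toMeasure.restrict K s < 1 →
      M.toMeasure.restrict K s = 0 := fun _ => M.restrict_toMeasure_eq_zero_of_lt_one hKm
  obtain ⟨F, hF⟩ := (finite_setOf_measure_singleton_ne_zero hμ).exists_finset_coe
  have hmem : ∀ x, x ∈ F ↔ x ∈ K ∧ 0 < M.m {x} := fun x => by
    rw [← Finset.mem_coe, hF]
    by_cases hx : x ∈ K <;> simp [M.restrict_toMeasure_apply hKm, hx, M.empty, pos_iff_ne_zero]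
  have hFK : ↑F ⊆ K := fun x hx => ((hmem x).1 hx).1
  have hnull : M.m (K \ ↑F) = 0 := by
    have h := measure_compl_setOf_measure_singleton_ne_zero hμ
    rwa [← hF, M.restrict_toMeasure_apply hKm F.finite_toSet.measurableSet.compl,
      ENat.toENNReal_eq_zero, Cardinal.toENat_eq_zero, ← sdiff_eq] at h
  exact ⟨F, hFK, fun x hx => by simp [hmem, hx], hnull,
    M.m_eq_sum_singleton_of_m_diff_eq_zero hKm hfin hFK hnull⟩

/-- If `K ⊆ [0,∞)` is σ-compact and `M K` is finite, then there is a finite set `F ⊆ K`,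
consisting exactly of the points `x ∈ K` with `M {x} > 0`, such that `M (K \ F) = 0`;
in particular `M K = Σ_{x ∈ F} M {x}`. -/
theorem cardinalMeasure_sigmaCompact_concentrated (M : CardinalBorelMeasure)
    (K : Set ℝ) (hK0 : K ⊆ Set.Ici 0)
    (hK : ∃ C : ℕ → Set ℝ, (∀ n, IsCompact (C n)) ∧ K = ⋃ n, C n)
    (hfin : M.m K < Cardinal.aleph0) :
    ∃ F : Finset ℝ, ↑F ⊆ K ∧ (∀ x ∈ K, (x ∈ F ↔ 0 < M.m {x})) ∧
      M.m (K \ ↑F) = 0 ∧ M.m K = ∑ x ∈ F, M.m {x} :=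
  cardinalMeasure_sigmaCompact_concentrated_general M K hK hfin
end
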